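/- arXiv:1910.12961 — 3 statements merged into one kernel-verified Lean document; each statement's English description precedes it below -/
import Mathlib

section
/- Let P, Q, R be m×m matrices with non-negative entries such that (P+Q+R)𝟏 = 𝟏, ‖R‖ < 1−ε for some ε>0, and let ψ be an m×m stochastic matrix such that I − R − Qψ is invertible. Then the matrix ψ' := (I − R − Qψ)⁻¹ P is a stochastic matrix (non-negative entries with each row summing to 1). -/
/-!
Put `A = R + Qψ`. Since `ψ𝟏 = 𝟏`, the row-sum hypothesis reads `P𝟏 = (1 - A)𝟏`, hence
`(1 - A)⁻¹P𝟏 = 𝟏`. The matrix `A` is entrywise nonnegative with row sums at most `1`, so for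
`0 < t < 1` the Neumann series shows `(1 - tA)⁻¹ ≥ 0`; letting `t → 1` and using continuity of
inversion at the unit `1 - A` gives `(1 - A)⁻¹ ≥ 0`.
-/

open Matrix Finset Filter Topology

namespace Matrix

variable {n R : Type*} [Fintype n] [DecidableEq n]

def nonnegSubsemiring (R n : Type*) [Fintype n] [DecidableEq n] [Semiring R] [PartialOrder R]
    [IsOrderedRing R] : Subsemiring (Matrix n n R) where
  carrier := {M | ∀ i j, 0 ≤ M i j}
  mul_mem' hM hN i j := sum_nonneg fun k _ => mul_nonneg (hM i k) (hN k j)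
  one_mem' i j := by
    rw [one_apply]
    split_ifs <;> simp
  add_mem' hM hN i j := add_nonneg (hM i j) (hN i j)
  zero_mem' _ _ := le_rfl

lemma mem_nonnegSubsemiring [Semiring R] [PartialOrder R] [IsOrderedRing R] {M : Matrix n n R} :
    M ∈ nonnegSubsemiring R n ↔ ∀ i j, 0 ≤ M i j :=
  Iff.rfl

lemma isClosed_nonnegSubsemiring [Semiring R] [PartialOrder R] [IsOrderedRing R]
    [TopologicalSpace R] [OrderClosedTopology R] :
    IsClosed (nonnegSubsemiring R n : Set (Matrix n n R)) := by
  simp only [nonnegSubsemiring, Set.ofPred_forall]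
  exact isClosed_iInter fun i => isClosed_iInter fun j =>
    isClosed_le continuous_const (continuous_apply_apply i j)

section LinftyOpNorm

attribute [local instance] Matrix.linftyOpNormedRing Matrix.linftyOpNormedAlgebra

lemma linfty_opNorm_le_one_of_nonneg {A : Matrix n n ℝ} (hA : A ∈ nonnegSubsemiring ℝ n)
    (hA1 : A *ᵥ 1 ≤ 1) : ‖A‖ ≤ 1 := by
  have : ‖A‖₊ ≤ 1 := by
    rw [linfty_opNNNorm_def]
    refine Finset.sup_le fun i _ => ?_
    rw [← NNReal.coe_le_coe]
    push_cast
    simpa [Real.norm_of_nonneg (hA i _), mulVec, dotProduct] using hA1 i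
  exact_mod_cast this

lemma ringInverse_one_sub_mem_nonnegSubsemiring {A : Matrix n n ℝ}
    (hA : A ∈ nonnegSubsemiring ℝ n) (hA1 : ‖A‖ < 1) :
    Ring.inverse (1 - A) ∈ nonnegSubsemiring ℝ n := by
  rw [← geom_series_eq_inverse A hA1]
  exact tsum_mem isClosed_nonnegSubsemiring fun k => pow_mem hA k

lemma inv_one_sub_mem_nonnegSubsemiring {A : Matrix n n ℝ} (hA : A ∈ nonnegSubsemiring ℝ n)
    (hA1 : A *ᵥ 1 ≤ 1) (hu : IsUnit (1 - A)) : (1 - A)⁻¹ ∈ nonnegSubsemiring ℝ n := by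
  have hnorm := linfty_opNorm_le_one_of_nonneg hA hA1
  have hlim : Tendsto (fun t : ℝ => Ring.inverse (1 - t • A)) (𝓝[<] 1)
      (𝓝 (Ring.inverse (1 - A))) := by
    have hcont : ContinuousAt Ring.inverse (1 - A) :=
      hu.unit_spec ▸ NormedRing.inverse_continuousAt hu.unit
    have : Tendsto (fun t : ℝ => 1 - t • A) (𝓝 1) (𝓝 (1 - A)) := by
      simpa using tendsto_const_nhds.sub ((tendsto_id (x := 𝓝 (1 : ℝ))).smul_const A)
    exact hcont.tendsto.comp (this.mono_left nhdsWithin_le_nhds)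
  have hmem : ∀ᶠ t in 𝓝[<] (1 : ℝ), Ring.inverse (1 - t • A) ∈ nonnegSubsemiring ℝ n := by
    filter_upwards [Ioo_mem_nhdsLT zero_lt_one] with t ⟨ht0, ht1⟩
    refine ringInverse_one_sub_mem_nonnegSubsemiring (fun i j => mul_nonneg ht0.le (hA i j)) ?_
    calc ‖t • A‖ = t * ‖A‖ := by rw [norm_smul, Real.norm_of_nonneg ht0.le]
      _ ≤ t := mul_le_of_le_one_right ht0.le hnorm
      _ < 1 := ht1
  rw [nonsing_inv_eq_ringInverse]
  exact isClosed_nonnegSubsemiring.mem_of_tendsto hlim hmem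

end LinftyOpNorm

theorem inv_one_sub_mul_mem_rowStochastic {A P : Matrix n n ℝ} (hA : A ∈ nonnegSubsemiring ℝ n)
    (hP : P ∈ nonnegSubsemiring ℝ n) (hsum : P *ᵥ 1 + A *ᵥ 1 = 1) (hu : IsUnit (1 - A)) :
    (1 - A)⁻¹ * P ∈ rowStochastic ℝ n := by
  have hA1 : A *ᵥ 1 ≤ 1 := fun i =>
    calc (A *ᵥ 1) i ≤ (P *ᵥ 1) i + (A *ᵥ 1) i :=
          le_add_of_nonneg_left (sum_nonneg fun j _ => mul_nonneg (hP i j) zero_le_one)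
      _ = 1 := congrFun hsum i
  refine ⟨mul_mem (inv_one_sub_mem_nonnegSubsemiring hA hA1 hu) hP, ?_⟩
  have hPv : P *ᵥ 1 = (1 - A) *ᵥ 1 := by
    rw [sub_mulVec, one_mulVec]
    exact eq_sub_of_add_eq hsum
  rw [← mulVec_mulVec, hPv, mulVec_mulVec, nonsing_inv_mul _ ((isUnit_iff_isUnit_det _).mp hu),
    one_mulVec]

end Matrix

theorem stmt0_general (m : ℕ)
    (P Q R ψ : Matrix (Fin m) (Fin m) ℝ)
    (hP : ∀ i j, 0 ≤ P i j) (hQ : ∀ i j, 0 ≤ Q i j) (hR : ∀ i j, 0 ≤ R i j)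
    (hrow : ∀ i, ∑ j, (P + Q + R) i j = 1)
    (hψnn : ∀ i j, 0 ≤ ψ i j) (hψrow : ∀ i, ∑ j, ψ i j = 1)
    (hinv : IsUnit (1 - R - Q * ψ)) :
    (∀ i j, 0 ≤ ((1 - R - Q * ψ)⁻¹ * P) i j) ∧
      (∀ i, ∑ j, ((1 - R - Q * ψ)⁻¹ * P) i j = 1) := by
  have hψ : ψ ∈ rowStochastic ℝ (Fin m) := mem_rowStochastic_iff_sum.mpr ⟨hψnn, hψrow⟩
  have hPQR : (P + Q + R) *ᵥ 1 = 1 := funext fun i => by simpa [mulVec, dotProduct] using hrow i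
  have hsum : P *ᵥ 1 + (R + Q * ψ) *ᵥ 1 = 1 :=
    calc P *ᵥ 1 + (R + Q * ψ) *ᵥ 1 = (P + Q + R) *ᵥ 1 := by
          rw [add_mulVec, ← mulVec_mulVec, one_vecMul_of_mem_rowStochastic hψ, add_mulVec,
            add_mulVec]
          abel
      _ = 1 := hPQR
  have hA : R + Q * ψ ∈ nonnegSubsemiring ℝ (Fin m) :=
    add_mem (mem_nonnegSubsemiring.mpr hR) (mul_mem (mem_nonnegSubsemiring.mpr hQ) hψ.1)
  rw [sub_sub] at hinv ⊢
  exact mem_rowStochastic_iff_sum.mp (inv_one_sub_mul_mem_rowStochastic hA hP hsum hinv)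

/-- If `P, Q, R` are nonnegative matrices with `(P+Q+R)𝟏 = 𝟏`, `‖R‖ < 1 - ε`
(max-row-sum norm), `ψ` is stochastic and `I - R - Qψ` is invertible, then
`ψ' = (I - R - Qψ)⁻¹ P` is stochastic. -/
theorem stmt0 (m : ℕ) (ε : ℝ) (hε : 0 < ε)
    (P Q R ψ : Matrix (Fin m) (Fin m) ℝ)
    (hP : ∀ i j, 0 ≤ P i j) (hQ : ∀ i j, 0 ≤ Q i j) (hR : ∀ i j, 0 ≤ R i j)
    (hrow : ∀ i, ∑ j, (P + Q + R) i j = 1)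
    (hRnorm : ∀ i, ∑ j, |R i j| < 1 - ε)
    (hψnn : ∀ i j, 0 ≤ ψ i j) (hψrow : ∀ i, ∑ j, ψ i j = 1)
    (hinv : IsUnit (1 - R - Q * ψ)) :
    (∀ i j, 0 ≤ ((1 - R - Q * ψ)⁻¹ * P) i j) ∧
      (∀ i, ∑ j, ((1 - R - Q * ψ)⁻¹ * P) i j = 1) :=
  stmt0_general m P Q R ψ hP hQ hR hrow hψnn hψrow hinv
end

section
/- Let τ₁, …, τₙ be independent random variables taking values in the positive integers, and suppose there is ε > 0 such that for every i and every integer l, P(τᵢ = l) ≤ 1 − ε. Then there is a constant C depending only on ε such that for all n ≥ 1 and all integers k, P(τ₁ + ⋯ + τₙ = k) ≤ C/√n. -/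
/-!
By Fourier inversion on `ℤ`, `P(S = k) ≤ (2π)⁻¹ ∫_{-π}^{π} ∏ |φᵢ t| dt`, and by AM-GM it
suffices to bound each `∫_{-π}^{π} |φᵢ t|ⁿ dt`. If `X'` is an independent copy of `X = τᵢ`, then
`|φᵢ t|² = E cos (t (X - X')) ≤ exp (-E [1 - cos (t (X - X'))])`. Conditioning on `X ≠ X'`, an
event of probability `q ≥ ε`, and applying Jensen's inequality bounds `|φᵢ t|ⁿ` by an average
over nonzero integers `d` of `exp (-(n q / 2) (1 - cos (t d)))`. By periodicity, the `t`-integral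
of each of these is `∫_{-π}^{π} exp (-(n q / 2) (1 - cos u)) du ≤ √(π³ / (n q))`, by Jordan's
inequality `1 - cos u ≥ 2 u² / π²` and a Gaussian integral.
-/

open MeasureTheory ProbabilityTheory Finset
open scoped Real
open Complex (I)

instance (a b : ℝ) : IsFiniteMeasure (volume.restrict (Set.uIoc a b)) :=
  isFiniteMeasure_restrict.mpr measure_Ioc_lt_top.ne

lemma integral_exp_mul_intCast_mul_I (j : ℤ) :
    ∫ t in -π..π, Complex.exp (t * j * I) = if j = 0 then 2 * (π : ℂ) else 0 := by
  split_ifs with hj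
  · simp [hj]; ring
  · have hc : (j * I : ℂ) ≠ 0 := by simp [hj, Complex.I_ne_zero]
    simp_rw [mul_comm _ (j : ℂ), mul_right_comm (j : ℂ) _ I]
    rw [integral_exp_mul_complex hc, div_eq_zero_iff, sub_eq_zero]
    left
    rw [Complex.exp_eq_exp_iff_exists_int]
    exact ⟨j, by push_cast; ring⟩

lemma charFun_map_intCast (ρ : Measure ℤ) (t : ℝ) :
    charFun (ρ.map ((↑) : ℤ → ℝ)) t = ∫ j, Complex.exp (t * j * I) ∂ρ := by
  rw [charFun_apply_real, integral_map (by fun_prop) (by fun_prop)]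
  simp

lemma measureReal_singleton_eq_integral_charFun (ρ : Measure ℤ) [IsFiniteMeasure ρ] (k : ℤ) :
    (ρ.real {k} : ℂ) =
      (2 * π)⁻¹ * ∫ t in -π..π, Complex.exp (-(t * k * I)) * charFun (ρ.map ((↑) : ℤ → ℝ)) t := by
  have hshift (t : ℝ) : Complex.exp (-(t * k * I)) * charFun (ρ.map ((↑) : ℤ → ℝ)) t =
      ∫ j, Complex.exp (t * (j - k : ℤ) * I) ∂ρ := by
    rw [charFun_map_intCast, ← integral_const_mul]
    congr 1 with j
    rw [← Complex.exp_add]; push_cast; ring_nf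
  have hbound : Integrable (Function.uncurry fun (t : ℝ) (j : ℤ) ↦
      Complex.exp (t * (j - k : ℤ) * I)) ((volume.restrict (Set.uIoc (-π) π)).prod ρ) :=
    Integrable.of_bound (by fun_prop) 1 (ae_of_all _ fun _ ↦
      (Complex.norm_exp _).trans_le (by simp))
  simp_rw [hshift, intervalIntegral_integral_swap hbound, integral_exp_mul_intCast_mul_I,
    sub_eq_zero]
  have hind : (fun j : ℤ ↦ if j = k then (2 * π : ℂ) else 0) =
      ({k} : Set ℤ).indicator fun _ ↦ (2 * π : ℂ) := by
    ext j; simp [Set.indicator_apply]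
  rw [hind, integral_indicator_const _ (measurableSet_singleton k), Complex.real_smul]
  push_cast
  field_simp

lemma measureReal_singleton_le_integral_norm_charFun (ρ : Measure ℤ) [IsFiniteMeasure ρ] (k : ℤ) :
    ρ.real {k} ≤ (2 * π)⁻¹ * ∫ t in -π..π, ‖charFun (ρ.map ((↑) : ℤ → ℝ)) t‖ := by
  have h := congrArg norm (measureReal_singleton_eq_integral_charFun ρ k)
  rw [Complex.norm_real, Real.norm_of_nonneg measureReal_nonneg, norm_mul,
    Complex.norm_real, Real.norm_of_nonneg (by positivity)] at h
  rw [h]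
  gcongr
  refine (intervalIntegral.norm_integral_le_integral_norm (by linarith [Real.pi_pos])).trans_eq ?_
  congr 1 with t
  simp [Complex.norm_exp]

lemma charFun_map_intCast_map_sum {ι Ω : Type*} {mΩ : MeasurableSpace Ω} {μ : Measure Ω}
    {τ : ι → Ω → ℤ} (hτ : ∀ i, Measurable (τ i)) (hindep : iIndepFun τ μ) (s : Finset ι) :
    charFun ((μ.map fun ω ↦ ∑ i ∈ s, τ i ω).map ((↑) : ℤ → ℝ)) =
      ∏ i ∈ s, charFun ((μ.map (τ i)).map ((↑) : ℤ → ℝ)) := by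
  have hcast (X : Ω → ℤ) (hX : Measurable X) :
      (μ.map X).map ((↑) : ℤ → ℝ) = μ.map fun ω ↦ (X ω : ℝ) :=
    Measure.map_map (by fun_prop) hX
  simp_rw [hcast _ (Finset.measurable_sum _ fun i _ ↦ hτ i), hcast _ (hτ _), Int.cast_sum]
  exact ((hindep.comp (fun _ ↦ ((↑) : ℤ → ℝ)) fun _ ↦ by fun_prop).restrict s)
    |>.charFun_map_fun_finsetSum_eq_prod fun i _ ↦ by fun_prop

lemma prod_le_sum_pow_card_div_card {ι : Type*} {s : Finset ι} (hs : s.Nonempty) {z : ι → ℝ}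
    (hz : ∀ i ∈ s, 0 ≤ z i) : ∏ i ∈ s, z i ≤ (∑ i ∈ s, z i ^ #s) / #s := by
  have hcard : (#s : ℝ) ≠ 0 := by exact_mod_cast hs.card_pos.ne'
  have h := Real.geom_mean_le_arith_mean_weighted s (fun _ ↦ (#s : ℝ)⁻¹) (fun i ↦ z i ^ #s)
    (fun _ _ ↦ by positivity) (by rw [sum_const, nsmul_eq_mul, mul_inv_cancel₀ hcard])
    (fun i hi ↦ pow_nonneg (hz i hi) _)
  rwa [← mul_sum, inv_mul_eq_div, prod_congr rfl fun i hi ↦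
    Real.pow_rpow_inv_natCast (hz i hi) (by exact_mod_cast hcard)] at h

lemma intervalIntegral_prod_le_of_intervalIntegral_pow_le {ι : Type*} {s : Finset ι}
    (hs : s.Nonempty) {a b : ℝ} (hab : a ≤ b) {f : ι → ℝ → ℝ} (hf : ∀ i ∈ s, Continuous (f i))
    (hf₀ : ∀ i ∈ s, ∀ t, 0 ≤ f i t) {B : ℝ} (hB : ∀ i ∈ s, ∫ t in a..b, f i t ^ #s ≤ B) :
    ∫ t in a..b, ∏ i ∈ s, f i t ≤ B := by
  have hpow (i) (hi : i ∈ s) : IntervalIntegrable (fun t ↦ f i t ^ #s) volume a b :=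
    ((hf i hi).pow _).intervalIntegrable _ _
  calc ∫ t in a..b, ∏ i ∈ s, f i t ≤ ∫ t in a..b, (∑ i ∈ s, f i t ^ #s) / #s :=
        intervalIntegral.integral_mono_on hab
          ((continuous_finsetProd s hf).intervalIntegrable _ _)
          (((continuous_finsetSum s fun i hi ↦ (hf i hi).pow _).div_const _).intervalIntegrable
            _ _)
          fun t _ ↦ prod_le_sum_pow_card_div_card hs fun i hi ↦ hf₀ i hi t
    _ = (∑ i ∈ s, ∫ t in a..b, f i t ^ #s) / #s := by
        rw [intervalIntegral.integral_div, intervalIntegral.integral_finsetSum hpow]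
    _ ≤ (∑ _i ∈ s, B) / #s := by gcongr with i hi; exact hB i hi
    _ = B := by
        rw [sum_const, nsmul_eq_mul, mul_div_cancel_left₀]
        exact_mod_cast hs.card_pos.ne'

lemma Function.Periodic.intervalIntegral_comp_mul_intCast {g : ℝ → ℝ} (hg : Continuous g)
    (hper : Function.Periodic g (2 * π)) {d : ℤ} (hd : d ≠ 0) :
    ∫ t in -π..π, g (t * d) = ∫ u in -π..π, g u := by
  have hd' : (d : ℝ) ≠ 0 := Int.cast_ne_zero.mpr hd
  rw [intervalIntegral.integral_comp_mul_right g hd',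
    show π * d = -π * d + d • (2 * π) by rw [zsmul_eq_mul]; ring,
    hper.intervalIntegral_add_zsmul_eq d _ fun _ _ ↦ hg.intervalIntegrable _ _,
    hper.intervalIntegral_add_eq _ (-π), show -π + 2 * π = π by ring, zsmul_eq_mul, smul_eq_mul,
    inv_mul_cancel_left₀ hd']

lemma integral_exp_neg_mul_one_sub_cos_le {a : ℝ} (ha : 0 < a) :
    ∫ u in -π..π, Real.exp (-(a * (1 - Real.cos u))) ≤ √(π ^ 3 / (2 * a)) := by
  have hb : 0 < 2 * a / π ^ 2 := by positivity
  calc ∫ u in -π..π, Real.exp (-(a * (1 - Real.cos u)))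
      ≤ ∫ u in -π..π, Real.exp (-(2 * a / π ^ 2) * u ^ 2) := by
        refine intervalIntegral.integral_mono_on (by linarith [Real.pi_pos])
          (Continuous.intervalIntegrable (by fun_prop) _ _)
          (Continuous.intervalIntegrable (by fun_prop) _ _) fun u hu ↦ ?_
        -- Jordan's inequality: `1 - cos u ≥ 2 u² / π²` on `[-π, π]`
        have h := Real.cos_le_one_sub_mul_cos_sq (abs_le.mpr hu)
        have h' : 2 * u ^ 2 ≤ (1 - Real.cos u) * π ^ 2 := by
          rw [← div_le_iff₀ (by positivity), mul_div_right_comm]; linarith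
        gcongr
        rw [neg_mul, neg_le_neg_iff, div_mul_eq_mul_div, div_le_iff₀ (by positivity)]
        nlinarith [mul_le_mul_of_nonneg_left h' ha.le]
    _ ≤ ∫ u, Real.exp (-(2 * a / π ^ 2) * u ^ 2) := by
        rw [intervalIntegral.integral_of_le (by linarith [Real.pi_pos])]
        exact setIntegral_le_integral (integrable_exp_neg_mul_sq hb)
          (ae_of_all _ fun _ ↦ (Real.exp_pos _).le)
    _ = √(π ^ 3 / (2 * a)) := by
        rw [integral_gaussian]
        congr 1
        field_simp

lemma norm_exp_neg_mul_one_sub_cos_le_one {a : ℝ} (ha : 0 ≤ a) (x : ℝ) :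
    ‖Real.exp (-(a * (1 - Real.cos x)))‖ ≤ 1 := by
  rw [Real.norm_of_nonneg (Real.exp_pos _).le, Real.exp_le_one_iff, neg_nonpos]
  exact mul_nonneg ha (sub_nonneg.mpr (Real.cos_le_one x))

lemma norm_one_sub_cos_le_two (x : ℝ) : ‖1 - Real.cos x‖ ≤ 2 := by
  rw [Real.norm_of_nonneg (sub_nonneg.mpr (Real.cos_le_one x))]
  linarith [Real.neg_one_le_cos x]

lemma continuous_integral_one_sub_cos (σ : Measure ℤ) [IsFiniteMeasure σ] :
    Continuous fun t : ℝ ↦ ∫ j, (1 - Real.cos (t * j)) ∂σ :=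
  continuous_of_dominated (fun _ ↦ by fun_prop)
    (fun _ ↦ ae_of_all _ fun _ ↦ norm_one_sub_cos_le_two _) (integrable_const 2)
    (ae_of_all _ fun _ ↦ by fun_prop)

lemma exp_neg_mul_integral_one_sub_cos_le_integral_cond (σ : Measure ℤ) [IsFiniteMeasure σ]
    {a : ℝ} (ha : 0 ≤ a) (hσ : 0 < σ.real {0}ᶜ) (t : ℝ) :
    Real.exp (-(a * ∫ j, (1 - Real.cos (t * j)) ∂σ)) ≤
      ∫ j, Real.exp (-(a * σ.real {0}ᶜ * (1 - Real.cos (t * j)))) ∂σ[|{0}ᶜ] := by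
  set q := σ.real {0}ᶜ
  have : IsProbabilityMeasure σ[|{0}ᶜ] :=
    cond_isProbabilityMeasure fun h ↦ hσ.ne' (by simp [q, measureReal_def, h])
  have haq : 0 ≤ a * q := mul_nonneg ha hσ.le
  -- the integrand vanishes at `j = 0`, so conditioning on `j ≠ 0` only rescales by `q`
  have hcond : ∫ j, (1 - Real.cos (t * j)) ∂σ = q * ∫ j, (1 - Real.cos (t * j)) ∂σ[|{0}ᶜ] := by
    rw [ProbabilityTheory.cond, integral_smul_measure,
      setIntegral_eq_integral_of_forall_compl_eq_zero fun j hj ↦ by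
        simp [show j = 0 by simpa using hj],
      ENNReal.toReal_inv, smul_eq_mul, ← measureReal_def, mul_inv_cancel_left₀ hσ.ne']
  rw [hcond, ← mul_assoc, ← integral_const_mul, ← integral_neg]
  refine convexOn_exp.map_integral_le Real.continuous_exp.continuousOn isClosed_univ
    (ae_of_all _ fun _ ↦ trivial) (Integrable.of_bound (by fun_prop) (a * q * 2) ?_)
    (Integrable.of_bound (by fun_prop) 1
      (ae_of_all _ fun _ ↦ norm_exp_neg_mul_one_sub_cos_le_one haq _))
  refine ae_of_all _ fun _ ↦ ?_
  rw [norm_neg, norm_mul, Real.norm_of_nonneg haq]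
  exact mul_le_mul_of_nonneg_left (norm_one_sub_cos_le_two _) haq

lemma integral_exp_neg_mul_integral_one_sub_cos_le (σ : Measure ℤ) [IsFiniteMeasure σ]
    {a : ℝ} (ha : 0 < a) (hσ : 0 < σ.real {0}ᶜ) :
    ∫ t in -π..π, Real.exp (-(a * ∫ j, (1 - Real.cos (t * j)) ∂σ))
      ≤ √(π ^ 3 / (2 * (a * σ.real {0}ᶜ))) := by
  set q := σ.real {0}ᶜ
  have : IsProbabilityMeasure σ[|{0}ᶜ] :=
    cond_isProbabilityMeasure fun h ↦ hσ.ne' (by simp [q, measureReal_def, h])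
  have haq : 0 < a * q := mul_pos ha hσ
  set F : ℝ → ℤ → ℝ := fun t j ↦ Real.exp (-(a * q * (1 - Real.cos (t * j))))
  have hF : Integrable (Function.uncurry F)
      ((volume.restrict (Set.uIoc (-π) π)).prod σ[|{0}ᶜ]) :=
    Integrable.of_bound (by fun_prop) 1
      (ae_of_all _ fun _ ↦ norm_exp_neg_mul_one_sub_cos_le_one haq.le _)
  have hperiodic : ∀ᵐ j ∂σ[|{0}ᶜ],
      ∫ t in -π..π, F t j = ∫ u in -π..π, Real.exp (-(a * q * (1 - Real.cos u))) :=
    (ae_cond_mem (measurableSet_singleton 0).compl).mono fun j hj ↦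
      Function.Periodic.intervalIntegral_comp_mul_intCast
        (g := fun u ↦ Real.exp (-(a * q * (1 - Real.cos u)))) (by fun_prop)
        (fun u ↦ by simp) hj
  calc ∫ t in -π..π, Real.exp (-(a * ∫ j, (1 - Real.cos (t * j)) ∂σ))
      ≤ ∫ t in -π..π, ∫ j, F t j ∂σ[|{0}ᶜ] :=
        intervalIntegral.integral_mono_on (by linarith [Real.pi_pos])
          (Continuous.intervalIntegrable
            (by have := continuous_integral_one_sub_cos σ; fun_prop) _ _)
          (intervalIntegrable_iff.mpr hF.integral_prod_left)
          fun t _ ↦ exp_neg_mul_integral_one_sub_cos_le_integral_cond σ ha.le hσ t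
    _ = ∫ j, (∫ t in -π..π, F t j) ∂σ[|{0}ᶜ] := intervalIntegral_integral_swap hF
    _ = ∫ u in -π..π, Real.exp (-(a * q * (1 - Real.cos u))) := by
        rw [integral_congr_ae hperiodic, integral_const, probReal_univ, one_smul]
    _ ≤ √(π ^ 3 / (2 * (a * q))) := integral_exp_neg_mul_one_sub_cos_le haq

noncomputable def symmetrization (ρ : Measure ℤ) : Measure ℤ :=
  (ρ.prod ρ).map fun p ↦ p.1 - p.2

instance (ρ : Measure ℤ) [IsProbabilityMeasure ρ] : IsProbabilityMeasure (symmetrization ρ) :=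
  Measure.isProbabilityMeasure_map (by fun_prop)

lemma sq_norm_charFun_map_intCast (ρ : Measure ℤ) [IsProbabilityMeasure ρ] (t : ℝ) :
    ‖charFun (ρ.map ((↑) : ℤ → ℝ)) t‖ ^ 2 = ∫ j, Real.cos (t * j) ∂(symmetrization ρ) := by
  have h : ((‖charFun (ρ.map ((↑) : ℤ → ℝ)) t‖ ^ 2 : ℝ) : ℂ) =
      ∫ j, Complex.exp ((t * j : ℝ) * I) ∂(symmetrization ρ) := by
    rw [Complex.ofReal_pow, ← Complex.mul_conj', ← charFun_neg, charFun_map_intCast,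
      charFun_map_intCast, ← integral_prod_mul, symmetrization,
      integral_map (by fun_prop) (by fun_prop)]
    congr 1 with p
    rw [← Complex.exp_add]; push_cast; ring_nf
  have hint : Integrable (fun j : ℤ ↦ Complex.exp ((t * j : ℝ) * I)) (symmetrization ρ) :=
    Integrable.of_bound (by fun_prop) 1
      (ae_of_all _ fun _ ↦ (Complex.norm_exp_ofReal_mul_I _).le)
  rw [← Complex.ofReal_re (_ ^ 2), h, ← RCLike.re_to_complex, ← integral_re hint]
  congr 1 with j
  exact Complex.exp_ofReal_mul_I_re _

lemma le_measureReal_symmetrization_compl_zero (ρ : Measure ℤ) [IsProbabilityMeasure ρ] {ε : ℝ}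
    (hρ : ∀ l, ρ.real {l} ≤ 1 - ε) : ε ≤ (symmetrization ρ).real {0}ᶜ := by
  have h1ε : 0 ≤ 1 - ε := measureReal_nonneg.trans (hρ 0)
  have hdiag : symmetrization ρ {0} ≤ ENNReal.ofReal (1 - ε) := by
    rw [symmetrization, Measure.map_apply (by fun_prop) (measurableSet_singleton 0),
      Measure.prod_apply (by measurability)]
    calc ∫⁻ j, ρ (Prod.mk j ⁻¹' ((fun p ↦ p.1 - p.2) ⁻¹' {0})) ∂ρ
        ≤ ∫⁻ _, ENNReal.ofReal (1 - ε) ∂ρ := lintegral_mono fun j ↦ by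
          rw [show Prod.mk j ⁻¹' _ = {j} by ext; simp [sub_eq_zero, eq_comm],
            ENNReal.le_ofReal_iff_toReal_le (measure_ne_top _ _) h1ε]
          exact hρ j
      _ = ENNReal.ofReal (1 - ε) := by simp
  rw [probReal_compl_eq_one_sub (measurableSet_singleton 0), measureReal_def]
  linarith [ENNReal.toReal_le_of_le_ofReal h1ε hdiag]

lemma norm_charFun_pow_le_exp (ρ : Measure ℤ) [IsProbabilityMeasure ρ] (n : ℕ) (t : ℝ) :
    ‖charFun (ρ.map ((↑) : ℤ → ℝ)) t‖ ^ n ≤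
      Real.exp (-(n / 2 * ∫ j, (1 - Real.cos (t * j)) ∂(symmetrization ρ))) := by
  set g := ∫ j, (1 - Real.cos (t * j)) ∂(symmetrization ρ)
  have hsq : ‖charFun (ρ.map ((↑) : ℤ → ℝ)) t‖ ^ 2 ≤ Real.exp (-g / 2) ^ 2 := by
    have hcos : Integrable (fun j : ℤ ↦ Real.cos (t * j)) (symmetrization ρ) :=
      Integrable.of_bound (by fun_prop) 1 (ae_of_all _ fun _ ↦ Real.abs_cos_le_one _)
    have hg : g = 1 - ∫ j, Real.cos (t * j) ∂(symmetrization ρ) := by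
      simp only [g]; rw [integral_sub (integrable_const 1) hcos]; simp
    rw [sq_norm_charFun_map_intCast, ← Real.exp_nat_mul,
      show ((2 : ℕ) : ℝ) * (-g / 2) = -g by push_cast; ring]
    linarith [Real.add_one_le_exp (-g)]
  calc ‖charFun (ρ.map ((↑) : ℤ → ℝ)) t‖ ^ n
      ≤ Real.exp (-g / 2) ^ n :=
        pow_le_pow_left₀ (norm_nonneg _)
          ((sq_le_sq₀ (norm_nonneg _) (Real.exp_pos _).le).mp hsq) n
    _ = Real.exp (-(n / 2 * g)) := by rw [← Real.exp_nat_mul]; ring_nf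

lemma intervalIntegral_norm_charFun_pow_le (ρ : Measure ℤ) [IsProbabilityMeasure ρ] {ε : ℝ}
    (hε : 0 < ε) (hρ : ∀ l, ρ.real {l} ≤ 1 - ε) {n : ℕ} (hn : 0 < n) :
    ∫ t in -π..π, ‖charFun (ρ.map ((↑) : ℤ → ℝ)) t‖ ^ n ≤ √(π ^ 3 / (n * ε)) := by
  have hq := le_measureReal_symmetrization_compl_zero ρ hρ
  calc ∫ t in -π..π, ‖charFun (ρ.map ((↑) : ℤ → ℝ)) t‖ ^ n
      ≤ ∫ t in -π..π,
          Real.exp (-(n / 2 * ∫ j, (1 - Real.cos (t * j)) ∂(symmetrization ρ))) :=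
        intervalIntegral.integral_mono_on (by linarith [Real.pi_pos])
          (Continuous.intervalIntegrable (by fun_prop) _ _)
          (Continuous.intervalIntegrable
            (by have := continuous_integral_one_sub_cos (symmetrization ρ); fun_prop) _ _)
          fun t _ ↦ norm_charFun_pow_le_exp ρ n t
    _ ≤ √(π ^ 3 / (2 * (n / 2 * (symmetrization ρ).real {0}ᶜ))) :=
        integral_exp_neg_mul_integral_one_sub_cos_le _ (by positivity) (hε.trans_le hq)
    _ ≤ √(π ^ 3 / (n * ε)) := by
        rw [← mul_assoc, mul_div_cancel₀ _ two_ne_zero]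
        gcongr

/-- Anti-concentration for sums of independent positive-integer valued random
variables: if no summand is concentrated at any point with probability more
than `1 - ε`, then `P(τ₁ + ⋯ + τₙ = k) ≤ C/√n` with `C` depending only on `ε`. -/
theorem stmt2 (ε : ℝ) (hε : 0 < ε) :
    ∃ C : ℝ, 0 < C ∧
      ∀ (Ω : Type) (mΩ : MeasurableSpace Ω) (μ : Measure Ω), IsProbabilityMeasure μ →
        ∀ τ : ℕ → Ω → ℤ, (∀ i, Measurable (τ i)) →
          iIndepFun τ μ →
          (∀ i ω, 1 ≤ τ i ω) →
          (∀ (i : ℕ) (l : ℤ), (μ {ω | τ i ω = l}).toReal ≤ 1 - ε) →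
          ∀ n : ℕ, 1 ≤ n → ∀ k : ℤ,
            (μ {ω | ∑ i ∈ Finset.range n, τ i ω = k}).toReal ≤ C / Real.sqrt n := by
  refine ⟨√(π / (4 * ε)), by positivity, ?_⟩
  intro Ω _ μ _ τ hτ hindep _ hρ n hn k
  have hlaw (i : ℕ) (l : ℤ) : (μ.map (τ i)).real {l} ≤ 1 - ε := by
    rw [map_measureReal_apply (hτ i) (measurableSet_singleton l)]
    exact hρ i l
  calc (μ {ω | ∑ i ∈ Finset.range n, τ i ω = k}).toReal
      = (μ.map fun ω ↦ ∑ i ∈ range n, τ i ω).real {k} :=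
        (map_measureReal_apply (by fun_prop) (measurableSet_singleton k)).symm
    _ ≤ (2 * π)⁻¹ * ∫ t in -π..π,
          ‖charFun ((μ.map fun ω ↦ ∑ i ∈ range n, τ i ω).map ((↑) : ℤ → ℝ)) t‖ :=
        measureReal_singleton_le_integral_norm_charFun _ k
    _ = (2 * π)⁻¹ * ∫ t in -π..π,
          ∏ i ∈ range n, ‖charFun ((μ.map (τ i)).map ((↑) : ℤ → ℝ)) t‖ := by
        simp_rw [charFun_map_intCast_map_sum hτ hindep, Finset.prod_apply, norm_prod]
    _ ≤ (2 * π)⁻¹ * √(π ^ 3 / (n * ε)) := by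
        gcongr
        refine intervalIntegral_prod_le_of_intervalIntegral_pow_le
          (nonempty_range_iff.mpr (by omega)) (by linarith [Real.pi_pos])
          (fun _ _ ↦ continuous_charFun.norm) (fun _ _ _ ↦ norm_nonneg _) fun i _ ↦ ?_
        have := Measure.isProbabilityMeasure_map (μ := μ) (hτ i).aemeasurable
        rw [card_range]
        exact intervalIntegral_norm_charFun_pow_le _ hε (hlaw i) (by omega)
    _ = √(π / (4 * ε)) / √n := by
        rw [← Real.sqrt_sq (by positivity : 0 ≤ (2 * π)⁻¹), ← Real.sqrt_mul (by positivity),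
          ← Real.sqrt_div' _ (Nat.cast_nonneg n)]
        congr 1
        field_simp
        ring
end

section
/- Let φₙ be real random variables converging in distribution to a centered Gaussian with variance σ̃² > 0, and let (aₙ) be any sequence of real numbers. Then for fixed σ̂ > 0, E[exp(−(1/2)(aₙ − σ̂⁻¹φₙ)²)] − exp(−aₙ²·σ̂²/(2(σ̂²+σ̃²)))·σ̂/√(σ̂²+σ̃²) → 0 as n → ∞, uniformly over the choice of the sequence (aₙ). -/
open MeasureTheory Filter Topology ProbabilityTheory Set Real
open scoped NNReal

/-!
With `g x = -x * exp (-x ^ 2 / 2)` we have `exp (-u ^ 2 / 2) = ∫ x in Iic u, g x`, so by Fubini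
`∫ exp (-(a - c⁻¹ * y) ^ 2 / 2) ∂ν = ∫ g x * cdf ν (c * (a - x)) dx` for every law `ν`. Hence the
difference between the two sides of the theorem is at most `‖g‖₁ * sup_t |Fₙ t - Φ t|`, whatever
`a` is. Pointwise convergence of distribution functions to a continuous limit is uniform (Pólya),
and the Gaussian side is computed by completing the square.
-/

noncomputable def gaussianDeriv (x : ℝ) : ℝ := -x * exp (-x ^ 2 / 2)

lemma integrable_gaussianDeriv : Integrable gaussianDeriv := by
  convert (integrable_mul_exp_neg_mul_sq (b := 1 / 2) one_half_pos).neg using 1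
  ext x; simp only [gaussianDeriv, Pi.neg_apply]; ring_nf

lemma hasDerivAt_exp_neg_sq_div_two (x : ℝ) :
    HasDerivAt (fun y => exp (-y ^ 2 / 2)) (gaussianDeriv x) x := by
  refine ((hasDerivAt_pow 2 x).neg.div_const 2).exp.congr_deriv ?_
  simp only [gaussianDeriv, Pi.neg_apply]; ring_nf

lemma tendsto_exp_neg_sq_div_two_atBot : Tendsto (fun y : ℝ => exp (-y ^ 2 / 2)) atBot (𝓝 0) := by
  refine tendsto_exp_atBot.comp ?_
  have hsq : Tendsto (fun y : ℝ => y ^ 2) atBot atTop := by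
    convert (tendsto_pow_atTop (α := ℝ) two_ne_zero).comp tendsto_neg_atBot_atTop using 1
    ext y; simp
  convert tendsto_neg_atTop_atBot.comp (hsq.atTop_div_const two_pos) using 1
  ext y; simp [neg_div]

lemma setIntegral_Iic_gaussianDeriv (t : ℝ) :
    ∫ x in Iic t, gaussianDeriv x = exp (-t ^ 2 / 2) := by
  rw [integral_Iic_of_hasDerivAt_of_tendsto' (fun x _ => hasDerivAt_exp_neg_sq_div_two x)
    integrable_gaussianDeriv.integrableOn tendsto_exp_neg_sq_div_two_atBot, sub_zero]

lemma integral_setIntegral_Iic_eq_integral_mul_measureReal {μ ν : Measure ℝ} [SFinite μ]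
    [IsFiniteMeasure ν] {f g : ℝ → ℝ} (hf : Integrable f μ) (hg : Measurable g) :
    ∫ y, (∫ x in Iic (g y), f x ∂μ) ∂ν = ∫ x, f x * ν.real {y | x ≤ g y} ∂μ := by
  set s := {p : ℝ × ℝ | p.1 ≤ g p.2}
  have hs : MeasurableSet s := measurableSet_le measurable_fst (hg.comp measurable_snd)
  calc ∫ y, (∫ x in Iic (g y), f x ∂μ) ∂ν
      = ∫ y, ∫ x, s.indicator (fun p => f p.1) (x, y) ∂μ ∂ν := by
        refine integral_congr_ae (.of_forall fun y => ?_)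
        dsimp only
        rw [← integral_indicator measurableSet_Iic]
        rfl
    _ = ∫ x, ∫ y, s.indicator (fun p => f p.1) (x, y) ∂ν ∂μ :=
        (integral_integral_swap (f := fun x y => s.indicator (fun p => f p.1) (x, y))
          ((hf.comp_fst ν).indicator hs)).symm
    _ = ∫ x, f x * ν.real {y | x ≤ g y} ∂μ := by
        refine integral_congr_ae (.of_forall fun x => ?_)
        dsimp only
        rw [mul_comm, ← smul_eq_mul,
          ← integral_indicator_const _ (measurableSet_le measurable_const hg)]
        rfl

lemma integral_exp_neg_half_sq_eq_integral_cdf (ν : Measure ℝ) [IsProbabilityMeasure ν] {c : ℝ}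
    (hc : 0 < c) (a : ℝ) :
    ∫ y, exp (-(1 / 2) * (a - c⁻¹ * y) ^ 2) ∂ν = ∫ x, gaussianDeriv x * cdf ν (c * (a - x)) := by
  have hslice (x : ℝ) : {y | x ≤ a - c⁻¹ * y} = Iic (c * (a - x)) := by
    ext y
    change x ≤ a - c⁻¹ * y ↔ y ≤ c * (a - x)
    rw [le_sub_comm, inv_mul_le_iff₀ hc]
  simp_rw [cdf_eq_real, ← hslice]
  rw [← integral_setIntegral_Iic_eq_integral_mul_measureReal integrable_gaussianDeriv
    (by fun_prop)]
  congr 1 with y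
  rw [setIntegral_Iic_gaussianDeriv]
  ring_nf

lemma integrable_gaussianDeriv_mul_cdf (ν : Measure ℝ) (c a : ℝ) :
    Integrable fun x => gaussianDeriv x * cdf ν (c * (a - x)) :=
  integrable_gaussianDeriv.mul_bdd
    ((cdf ν).mono.measurable.comp (by fun_prop)).aestronglyMeasurable
    (.of_forall fun _ => by rw [norm_of_nonneg (cdf_nonneg ν _)]; exact cdf_le_one ν _)

lemma abs_integral_exp_neg_half_sq_sub_le (ν₁ ν₂ : Measure ℝ) [IsProbabilityMeasure ν₁]
    [IsProbabilityMeasure ν₂] {c : ℝ} (hc : 0 < c) (a : ℝ) {ε : ℝ}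
    (hε : ∀ t, |cdf ν₁ t - cdf ν₂ t| ≤ ε) :
    |∫ y, exp (-(1 / 2) * (a - c⁻¹ * y) ^ 2) ∂ν₁ - ∫ y, exp (-(1 / 2) * (a - c⁻¹ * y) ^ 2) ∂ν₂|
      ≤ (∫ x, |gaussianDeriv x|) * ε := by
  rw [integral_exp_neg_half_sq_eq_integral_cdf ν₁ hc,
    integral_exp_neg_half_sq_eq_integral_cdf ν₂ hc,
    ← integral_sub (integrable_gaussianDeriv_mul_cdf ν₁ c a)
      (integrable_gaussianDeriv_mul_cdf ν₂ c a), ← integral_mul_const]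
  refine abs_integral_le_integral_abs.trans <| integral_mono_of_nonneg
    (.of_forall fun _ => abs_nonneg _) (integrable_gaussianDeriv.abs.mul_const ε)
    (.of_forall fun x => ?_)
  dsimp only
  rw [← mul_sub, abs_mul]
  exact mul_le_mul_of_nonneg_left (hε _) (abs_nonneg _)

lemma continuous_cdf (ν : Measure ℝ) [IsProbabilityMeasure ν] [NullSingletonClass ν] :
    Continuous (cdf ν) := by
  refine continuous_iff_continuousAt.2 fun x => ?_
  rw [(cdf ν).mono.continuousAt_iff_leftLim_eq_rightLim, StieltjesFunction.rightLim_eq]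
  have h := (cdf ν).measure_singleton x
  rw [measure_cdf, measure_singleton, eq_comm, ENNReal.ofReal_eq_zero, sub_nonpos] at h
  exact le_antisymm ((cdf ν).mono.leftLim_le le_rfl) h

lemma cdf_gaussianReal (m : ℝ) {v : ℝ≥0} (hv : v ≠ 0) (t : ℝ) :
    cdf (gaussianReal m v) t = ∫ x in Iic t, gaussianPDFReal m v x := by
  rw [cdf_eq_real, measureReal_def, gaussianReal_apply_eq_integral m hv,
    ENNReal.toReal_ofReal
      (setIntegral_nonneg measurableSet_Iic fun x _ => gaussianPDFReal_nonneg m v x)]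

lemma integral_exp_neg_half_sq_gaussianReal {v : ℝ≥0} (hv : v ≠ 0) {c : ℝ} (hc : 0 < c)
    (a : ℝ) :
    ∫ y, exp (-(1 / 2) * (a - c⁻¹ * y) ^ 2) ∂gaussianReal 0 v
      = c / √(c ^ 2 + v) * exp (-a ^ 2 * c ^ 2 / (2 * (c ^ 2 + v))) := by
  have hv' : (0 : ℝ) < v := NNReal.coe_pos.2 (pos_iff_ne_zero.2 hv)
  set b : ℝ := (c ^ 2 + v) / (2 * c ^ 2 * v) with hb_def
  have hb : 0 < b := by positivity
  set m : ℝ := a * c * v / (c ^ 2 + v) with hm_def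
  set E : ℝ := -a ^ 2 * c ^ 2 / (2 * (c ^ 2 + v)) with hE_def
  have hsq : ∀ y : ℝ, gaussianPDFReal 0 v y * exp (-(1 / 2) * (a - c⁻¹ * y) ^ 2)
      = ((√(2 * π * v))⁻¹ * exp E) * exp (-b * (y - m) ^ 2) := fun y => by
    simp only [gaussianPDFReal, mul_assoc, ← exp_add]
    congr 2
    rw [hb_def, hm_def, hE_def]
    field_simp
    ring
  have hπb : √(π / b) = √(2 * π * v) * (c / √(c ^ 2 + v)) := by
    rw [show π / b = 2 * π * v * (c ^ 2 / (c ^ 2 + v)) by rw [hb_def]; field_simp,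
      sqrt_mul (by positivity), sqrt_div (sq_nonneg c), sqrt_sq hc.le]
  rw [integral_gaussianReal_eq_integral_smul hv]
  simp_rw [smul_eq_mul, hsq]
  rw [integral_const_mul, integral_sub_right_eq_self (fun y => exp (-b * y ^ 2)) m,
    integral_gaussian, hπb]
  field_simp

lemma abs_sub_le_of_sandwich {gs gt gu fs ft fu ε : ℝ} (hgs : gs ≤ gt) (hgu : gt ≤ gu)
    (hfs : fs ≤ ft) (hfu : ft ≤ fu) (hs : |gs - fs| ≤ ε) (hu : |gu - fu| ≤ ε)
    (hf : fu - fs ≤ ε) : |gt - ft| ≤ 2 * ε := by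
  rw [abs_le] at hs hu ⊢
  constructor <;> linarith [hs.1, hs.2, hu.1, hu.2]

lemma Continuous.exists_finset_bracket {F : ℝ → ℝ} (hFc : Continuous F)
    (hbot : Tendsto F atBot (𝓝 0)) (htop : Tendsto F atTop (𝓝 1)) {ε : ℝ} (hε : 0 < ε) :
    ∃ S : Finset ℝ, ∀ t, (∃ u ∈ S, t ≤ u ∧ F u ≤ ε) ∨ (∃ s ∈ S, s ≤ t ∧ 1 - ε ≤ F s) ∨
      ∃ s ∈ S, ∃ u ∈ S, s ≤ t ∧ t ≤ u ∧ F u - F s ≤ ε := by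
  obtain ⟨lo, hlo⟩ := (hbot.eventually (eventually_le_nhds hε)).exists
  obtain ⟨hi, hhi, hlohi⟩ :=
    ((htop.eventually (eventually_ge_nhds (sub_lt_self 1 hε))).and
      (eventually_ge_atTop lo)).exists
  obtain ⟨δ, hδ, hFδ⟩ := Metric.uniformContinuousOn_iff.1
    ((isCompact_Icc (a := lo) (b := hi)).uniformContinuousOn_of_continuous hFc.continuousOn) ε hε
  obtain ⟨k, hk⟩ := exists_nat_gt ((hi - lo) / δ)
  have hk0 : (0 : ℝ) < k := lt_of_le_of_lt (div_nonneg (sub_nonneg.2 hlohi) hδ.le) hk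
  set h := (hi - lo) / k
  have hhδ : h < δ := by rwa [div_lt_iff₀ hk0, ← div_lt_iff₀' hδ]
  have hgrid : lo + k * h = hi := by rw [mul_div_cancel₀ _ hk0.ne']; ring
  refine ⟨(Finset.range (k + 1)).image fun i : ℕ => lo + i * h, fun t => ?_⟩
  have hmem : ∀ i ≤ k, lo + i * h ∈ (Finset.range (k + 1)).image fun i : ℕ => lo + i * h :=
    fun i hi => Finset.mem_image_of_mem _ (Finset.mem_range.2 (Nat.lt_succ_of_le hi))
  rcases lt_or_ge t lo with htlo | hlot
  · exact .inl ⟨lo, by simpa using hmem 0 (Nat.zero_le k), htlo.le, hlo⟩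
  rcases le_or_gt hi t with hhit | hthi
  · exact .inr (.inl ⟨hi, hgrid ▸ hmem k le_rfl, hhit, hhi⟩)
  have hh : 0 < h := div_pos (by linarith) hk0
  set i := ⌊(t - lo) / h⌋₊
  have hi_le : lo + i * h ≤ t := by
    have := Nat.floor_le (div_nonneg (sub_nonneg.2 hlot) hh.le)
    rw [le_div_iff₀ hh] at this; linarith
  have hi_lt : t < lo + (i + 1 : ℕ) * h := by
    have := Nat.lt_floor_add_one ((t - lo) / h)
    rw [div_lt_iff₀ hh] at this; push_cast; linarith
  have hik : i + 1 ≤ k := by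
    have : (i : ℝ) < k := by
      rw [← mul_lt_mul_iff_left₀ hh]; linarith
    exact_mod_cast this
  have hi1_le : lo + (i + 1 : ℕ) * h ≤ hi := by
    rw [← hgrid]; gcongr
  have hs_mem : lo + i * h ∈ Icc lo hi :=
    ⟨le_add_of_nonneg_right (by positivity), hi_le.trans hthi.le⟩
  have hu_mem : lo + (i + 1 : ℕ) * h ∈ Icc lo hi :=
    ⟨le_add_of_nonneg_right (by positivity), hi1_le⟩
  have hsu : dist (lo + (i + 1 : ℕ) * h) (lo + i * h) < δ := by
    rwa [Real.dist_eq, Nat.cast_succ, add_mul, one_mul, add_sub_add_left_eq_sub,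
      add_sub_cancel_left, abs_of_pos hh]
  refine .inr (.inr ⟨_, hmem i (by omega), _, hmem (i + 1) hik, hi_le, hi_lt.le, ?_⟩)
  exact (le_abs_self _).trans (hFδ _ hu_mem _ hs_mem hsu).le

theorem tendstoUniformly_of_monotone_of_continuous {ι : Type*} {l : Filter ι} {G : ι → ℝ → ℝ}
    {F : ℝ → ℝ} (hG : ∀ i, Monotone (G i)) (hG0 : ∀ i t, 0 ≤ G i t) (hG1 : ∀ i t, G i t ≤ 1)
    (hF : Monotone F) (hFc : Continuous F) (hbot : Tendsto F atBot (𝓝 0))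
    (htop : Tendsto F atTop (𝓝 1)) (hlim : ∀ t, Tendsto (fun i => G i t) l (𝓝 (F t))) :
    TendstoUniformly G F l := by
  refine Metric.tendstoUniformly_iff.2 fun ε hε => ?_
  obtain ⟨S, hS⟩ := hFc.exists_finset_bracket hbot htop (by positivity : 0 < ε / 3)
  have hnear : ∀ᶠ i in l, ∀ s ∈ S, |G i s - F s| ≤ ε / 3 :=
    S.eventually_all.2 fun s _ =>
      (hlim s).eventually (Metric.closedBall_mem_nhds _ (by positivity))
  filter_upwards [hnear] with i hi t
  suffices |G i t - F t| ≤ 2 * (ε / 3) by rw [dist_comm, Real.dist_eq]; linarith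
  rcases hS t with ⟨u, hu, htu, hFu⟩ | ⟨s, hs, hst, hFs⟩ | ⟨s, hs, u, hu, hst, htu, hFsu⟩
  · exact abs_sub_le_of_sandwich (hG0 i t) (hG i htu) (hF.le_of_tendsto hbot t) (hF htu)
      (by simp; positivity) (hi u hu) (by simpa using hFu)
  · exact abs_sub_le_of_sandwich (hG i hst) (hG1 i t) (hF hst) (hF.ge_of_tendsto htop t)
      (hi s hs) (by simp; positivity) (by linarith)
  · exact abs_sub_le_of_sandwich (hG i hst) (hG i htu) (hF hst) (hF htu) (hi s hs) (hi u hu) hFsu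

/-- If `φₙ ⇒ N(0, σ̃²)` in distribution, then for fixed `σ̂ > 0`,
`E[exp(−(1/2)(a − σ̂⁻¹φₙ)²)] → (σ̂/√(σ̂²+σ̃²)) exp(−a²σ̂²/(2(σ̂²+σ̃²)))`
uniformly in the centering `a`. -/
theorem stmt10 {Ω : Type*} [MeasurableSpace Ω] (μ : Measure Ω) [IsProbabilityMeasure μ]
    (φ : ℕ → Ω → ℝ) (hmeas : ∀ n, Measurable (φ n))
    (σt σh : ℝ) (hσt : 0 < σt) (hσh : 0 < σh)
    (hclt : ∀ t : ℝ, Tendsto (fun n => (μ {ω | φ n ω ≤ t}).toReal) atTop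
      (𝓝 (∫ x in Set.Iic t, (Real.sqrt (2 * Real.pi) * σt)⁻¹ * Real.exp (-x ^ 2 / (2 * σt ^ 2))))) :
    ∀ η : ℝ, 0 < η → ∃ N : ℕ, ∀ n ≥ N, ∀ a : ℝ,
      |(∫ ω, Real.exp (-(1 / 2) * (a - σh⁻¹ * φ n ω) ^ 2) ∂μ) -
        σh / Real.sqrt (σh ^ 2 + σt ^ 2) *
          Real.exp (-a ^ 2 * σh ^ 2 / (2 * (σh ^ 2 + σt ^ 2)))| < η := by
  obtain ⟨v, hv_def⟩ : ∃ v : ℝ≥0, (v : ℝ) = σt ^ 2 := ⟨⟨σt ^ 2, sq_nonneg σt⟩, rfl⟩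
  have hv : v ≠ 0 := by rintro rfl; exact (pow_pos hσt 2).ne' hv_def.symm
  have := nullSingletonClass_gaussianReal (μ := 0) hv
  have (n : ℕ) : IsProbabilityMeasure (μ.map (φ n)) :=
    Measure.isProbabilityMeasure_map (hmeas n).aemeasurable
  have hcdf (n : ℕ) (t : ℝ) : cdf (μ.map (φ n)) t = (μ {ω | φ n ω ≤ t}).toReal := by
    rw [cdf_eq_real, map_measureReal_apply (hmeas n) measurableSet_Iic]; rfl
  have hgauss (t : ℝ) : cdf (gaussianReal 0 v) t
      = ∫ x in Iic t, (√(2 * π) * σt)⁻¹ * exp (-x ^ 2 / (2 * σt ^ 2)) := by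
    rw [cdf_gaussianReal 0 hv]
    congr 1 with x
    rw [gaussianPDFReal, hv_def, sqrt_mul (by positivity), sqrt_sq hσt.le, sub_zero]
  have hunif : TendstoUniformly (fun n => cdf (μ.map (φ n))) (cdf (gaussianReal 0 v)) atTop :=
    tendstoUniformly_of_monotone_of_continuous (fun n => monotone_cdf _) (fun n => cdf_nonneg _)
      (fun n => cdf_le_one _) (monotone_cdf _) (continuous_cdf _) (tendsto_cdf_atBot _)
      (tendsto_cdf_atTop _) fun t => by simpa only [hcdf, hgauss] using hclt t
  intro η hη
  set K := ∫ x, |gaussianDeriv x|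
  have hK : 0 ≤ K := integral_nonneg fun _ => abs_nonneg _
  obtain ⟨N, hN⟩ := eventually_atTop.1
    (Metric.tendstoUniformly_iff.1 hunif (η / (K + 1)) (by positivity))
  refine ⟨N, fun n hn a => ?_⟩
  have hclose := abs_integral_exp_neg_half_sq_sub_le (μ.map (φ n)) (gaussianReal 0 v) hσh a
    fun t => by rw [abs_sub_comm]; exact (hN n hn t).le
  rw [integral_map (hmeas n).aemeasurable (by fun_prop),
    integral_exp_neg_half_sq_gaussianReal hv hσh, hv_def] at hclose
  calc _ ≤ K * (η / (K + 1)) := hclose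
    _ < η := by
      rw [mul_div_left_comm]
      exact mul_lt_of_lt_one_right hη ((div_lt_one (by linarith)).2 (by linarith))
end
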